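/- Let β, x₁,…,x_d, b₁, b₂,… be independent indeterminates and work in the ring of formal power series over ℤ in these variables. Let a = (a₁,…,a_d) ∈ ℤ^d with a_i + d - i ≥ 0 for every i. Define the d×d matrices H' := ( Σ_{s≥0} C(i-j, s) β^s G^{(a_i+d-i)}_{a_i+j-i+s} )_{1≤i,j≤d} and M̄ := ( (-1)^{d-i} ē_{d-i}^{(j)} )_{1≤i,j≤d}, where ē_p^{(j)} is the p-th elementary symmetric polynomial in the d-1 quantities x_i/(1+βx_i) for 1 ≤ i ≤ d, i ≠ j, and C(n,s) is the generalized binomial coefficient given by (1+x)^n = Σ_{s≥0} C(n,s)x^s. Then the (i,j)-entry of the product H'M̄ equals [x_j|b]^{a_i+d-i} · (1+βx_j)^{i-d}. -/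

import Mathlib

open scoped BigOperators

namespace GrothDet

/-- Index type for the indeterminates: `β`, `x₁,…,x_d`, `b₁,b₂,…`. -/
abbrev Idx (d : ℕ) := Unit ⊕ Fin d ⊕ ℕ

/-- The ambient ring: formal power series over `ℤ` in `β`, the `xᵢ` and the `bⱼ`. -/
abbrev R (d : ℕ) := MvPowerSeries (Idx d) ℤ

noncomputable def β (d : ℕ) : R d := MvPowerSeries.X (Sum.inl ())
noncomputable def x (d : ℕ) (i : Fin d) : R d := MvPowerSeries.X (Sum.inr (Sum.inl i))
noncomputable def b (d : ℕ) (ℓ : ℕ) : R d := MvPowerSeries.X (Sum.inr (Sum.inr ℓ))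

/-- `x ⊕ y := x + y + βxy`. -/
noncomputable def oplus (d : ℕ) (u v : R d) : R d := u + v + β d * u * v

/-- `[y|b]^k := (y ⊕ b₁)⋯(y ⊕ b_k)`. -/
noncomputable def fb (d : ℕ) (y : R d) (k : ℕ) : R d :=
  ∏ ℓ ∈ Finset.range k, oplus d y (b d ℓ)

/-- The multiplicative inverse of `1 + β * x j` (a unit since its constant term is `1`). -/
noncomputable def invOneAdd (d : ℕ) (j : Fin d) : R d :=
  MvPowerSeries.invOfUnit (1 + β d * x d j) 1

/-- `F^{(k)}(u) = ∏ᵢ (1+βxᵢ)/(1-xᵢu) · ∏_{ℓ=1}^k (1+(u+β)b_ℓ)` as a power series in `u`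
over `R d`; here `(1-xᵢu)⁻¹ = ∑_n xᵢⁿ uⁿ`. -/
noncomputable def F (d : ℕ) (k : ℕ) : PowerSeries (R d) :=
  (∏ i : Fin d,
      PowerSeries.C (R := R d) (1 + β d * x d i) * PowerSeries.mk fun n => x d i ^ n) *
    ∏ ℓ ∈ Finset.range k,
      (1 + (PowerSeries.X + PowerSeries.C (R := R d) (β d)) * PowerSeries.C (R := R d) (b d ℓ))

/-- `[u^t] F^{(k)}(u)`, extended by `0` in negative degrees `t`. -/
noncomputable def Fcoeff (d : ℕ) (k : ℕ) (t : ℤ) : R d :=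
  if 0 ≤ t then PowerSeries.coeff (R := R d) t.toNat (F d k) else 0

/-- The sum `∑_{s≥0} f s` of a family of power series such that `β^s ∣ f s`:
it is defined coefficientwise; on the coefficient of a monomial `n` only the
(finitely many) terms with `s ≤ n(β)` contribute, and the value is the limit of the
partial sums in the formal power series topology. -/
noncomputable def seriesSum (d : ℕ) (f : ℕ → R d) : R d :=
  (fun n => ∑ s ∈ Finset.range (n (Sum.inl ()) + 1), MvPowerSeries.coeff (R := ℤ) n (f s) :
    (Idx d →₀ ℕ) → ℤ)

/-- `G^{(k)}_m = ∑_{s≥0} (-β)^s [u^{m+s}] F^{(k)}(u)`. -/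
noncomputable def G (d : ℕ) (k : ℕ) (m : ℤ) : R d :=
  seriesSum d fun s => (-β d) ^ s * Fcoeff d k (m + s)

/-- The `p`-th elementary symmetric function of the family `f` restricted to `S`. -/
noncomputable def esym (d : ℕ) (S : Finset (Fin d)) (p : ℕ) (f : Fin d → R d) : R d :=
  ∑ t ∈ S.powersetCard p, ∏ i ∈ t, f i

/-- `x_i/(1+βx_i) = -x̄_i`. -/
noncomputable def xbar (d : ℕ) (i : Fin d) : R d := x d i * invOneAdd d i

/-!
Both sides are compared modulo every power of `β`. Modulo `β^(N+1)` the series defining `H'`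
and `G` may be truncated, and Vandermonde's identity turns the entry `H'_{il}` into
`∑_{r ≤ N} C(i-l-1, r) β^r [u^(k-p+r)] F^{(k)}`, where `k = a_i+d-i`, `p = d-l` and `q = d-i`.
This is the coefficient of `u^(k+N)` in `u^p T_{p-q-1} F^{(k)}`, where `T_e` is the polynomial
part of `u^N (1 + β/u)^e`, and Pascal's rule gives `u^p T_{p-q-1} ≡ (u+β)^p T_{-q-1}`. Summed
against `(-1)^p ē_p`, the factor `∏_{r ≠ j} (1 - x_r u)/(1 + βx_r)` appears and cancels every
factor of `F^{(k)}` except `(1 + βx_j)/(1 - x_j u)`; the coefficients of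
`∏_ℓ (1 + (u+β)b_ℓ)/(1 - x_j u)` from `u^k` on are `x_j^r [x_j|b]^k`, and what is left is a
truncation of `(1 + βx_j)^(-q)`.
-/

open Finset PowerSeries

section CommRing

variable {A : Type*} [CommRing A]

/-- `∑_{r ≤ N} C(e, r) c^r X^(N-r)`: the part of `X^N (1 + c/X)^e` without negative powers
of `X`. -/
def truncBinomial (e : ℤ) (N : ℕ) (X c : A) : A :=
  ∑ r ∈ range (N + 1), ((Ring.choose e r : ℤ) : A) * c ^ r * X ^ (N - r)

theorem truncBinomial_succ (e : ℤ) (N : ℕ) (X c : A) :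
    truncBinomial e (N + 1) X c =
      X * truncBinomial e N X c + ((Ring.choose e (N + 1) : ℤ) : A) * c ^ (N + 1) := by
  rw [truncBinomial, sum_range_succ, Nat.sub_self, pow_zero, mul_one, truncBinomial, mul_sum]
  congr 1
  refine sum_congr rfl fun r hr => ?_
  rw [Nat.sub_add_comm (Nat.lt_succ_iff.mp (mem_range.mp hr)), pow_succ]
  ring

theorem truncBinomial_zero_left (N : ℕ) (X c : A) : truncBinomial 0 N X c = X ^ N := by
  rw [truncBinomial, sum_eq_single 0 (fun r _ hr => by
    rw [Ring.choose_zero_pos ℤ (Nat.pos_of_ne_zero hr)]; simp) (by simp)]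
  simp

theorem add_mul_truncBinomial (e : ℤ) (N : ℕ) (X c : A) :
    (X + c) * truncBinomial e N X c =
      X * truncBinomial (e + 1) N X c + ((Ring.choose e N : ℤ) : A) * c ^ (N + 1) := by
  induction N with
  | zero => simp [truncBinomial]
  | succ N ih =>
    rw [truncBinomial_succ, truncBinomial_succ, Ring.choose_succ_succ]
    push_cast
    linear_combination X * ih

theorem pow_dvd_pow_mul_truncBinomial_sub (e : ℤ) (N p : ℕ) (X c : A) :
    c ^ (N + 1) ∣
      X ^ p * truncBinomial (e + p) N X c - (X + c) ^ p * truncBinomial e N X c := by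
  induction p with
  | zero => simp
  | succ p ih =>
    have key : X ^ (p + 1) * truncBinomial (e + (p + 1 : ℕ)) N X c
          - (X + c) ^ (p + 1) * truncBinomial e N X c
        = (X + c) * (X ^ p * truncBinomial (e + p) N X c - (X + c) ^ p * truncBinomial e N X c)
          - c ^ (N + 1) * (X ^ p * ((Ring.choose (e + p) N : ℤ) : A)) := by
      rw [Nat.cast_succ, ← add_assoc]
      linear_combination (-X ^ p) * add_mul_truncBinomial (e + p) N X c
    rw [key]
    exact dvd_sub (dvd_mul_of_dvd_right ih _) (dvd_mul_right _ _)

theorem pow_dvd_one_add_mul_truncBinomial_sub {y u : A} (hu : u * (1 + y) = 1) (q N : ℕ) :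
    y ^ (N + 1) ∣ (1 + y) * truncBinomial (-((q : ℤ) + 1)) N 1 y - u ^ q := by
  have h := pow_dvd_pow_mul_truncBinomial_sub (-((q : ℤ) + 1)) N (q + 1) 1 y
  have huq : u ^ q * (1 + y) ^ q = 1 := by rw [← mul_pow, hu, one_pow]
  rw [show -((q : ℤ) + 1) + (q + 1 : ℕ) = 0 by push_cast; ring, truncBinomial_zero_left,
    one_pow, one_pow, one_mul] at h
  rw [show (1 + y) * truncBinomial (-((q : ℤ) + 1)) N 1 y - u ^ q
      = -u ^ q * (1 - (1 + y) ^ (q + 1) * truncBinomial (-((q : ℤ) + 1)) N 1 y) by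
    linear_combination (-(1 + y) * truncBinomial (-((q : ℤ) + 1)) N 1 y) * huq]
  exact dvd_mul_of_dvd_right h _

theorem coeff_add_truncBinomial_mul (e : ℤ) (N k : ℕ) (c : A) (φ : A⟦X⟧) :
    coeff (k + N) (truncBinomial e N X (C c) * φ) =
      ∑ r ∈ range (N + 1), ((Ring.choose e r : ℤ) : A) * c ^ r * coeff (k + r) φ := by
  rw [truncBinomial, sum_mul, map_sum]
  refine sum_congr rfl fun r hr => ?_
  have hr : r ≤ N := Nat.lt_succ_iff.mp (mem_range.mp hr)
  rw [← map_intCast (C (R := A)), ← map_pow, ← map_mul, mul_assoc, coeff_C_mul,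
    coeff_X_pow_mul', if_pos (by omega), show k + N - (N - r) = k + r by omega]

theorem dvd_coeff_sub_of_C_dvd {c : A} {φ ψ : A⟦X⟧} (h : C c ∣ φ - ψ) (n : ℕ) :
    c ∣ coeff n φ - coeff n ψ := by
  obtain ⟨θ, hθ⟩ := h
  exact ⟨coeff n θ, by rw [← map_sub, hθ, coeff_C_mul]⟩

theorem pow_dvd_sum_range_sum_range_sub_sum_antidiagonal (c : A) (N : ℕ) (f : ℕ → ℕ → A)
    (hf : ∀ s t, N ≤ s + t → c ^ N ∣ f s t) :
    c ^ N ∣ ∑ s ∈ range N, ∑ t ∈ range N, f s t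
      - ∑ r ∈ range N, ∑ p ∈ antidiagonal r, f p.1 p.2 := by
  classical
  have hdiag : ∑ r ∈ range N, ∑ p ∈ antidiagonal r, f p.1 p.2
      = ∑ p ∈ range N ×ˢ range N with p.1 + p.2 < N, f p.1 p.2 := by
    rw [← sum_biUnion fun r _ r' _ h => disjoint_left.mpr fun p hp hp' => by
      rw [HasAntidiagonal.mem_antidiagonal] at hp hp'
      exact h (hp.symm.trans hp')]
    congr 1
    ext ⟨s, t⟩
    simp only [mem_biUnion, mem_range, HasAntidiagonal.mem_antidiagonal, mem_filter, mem_product]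
    constructor
    · rintro ⟨r, hr, rfl⟩; omega
    · rintro ⟨-, h⟩; exact ⟨s + t, h, rfl⟩
  rw [hdiag, ← sum_product', ← sum_filter_add_sum_filter_not _ (fun p => p.1 + p.2 < N),
    add_sub_cancel_left]
  exact dvd_sum fun p hp => hf p.1 p.2 (not_lt.mp (mem_filter.mp hp).2)

theorem choose_neg_one (t : ℕ) : Ring.choose (-1 : ℤ) t = (-1) ^ t := by
  rw [show (-1 : ℤ) = -((1 : ℕ) : ℤ) by simp, Ring.choose_neg,
    show ((1 : ℕ) : ℤ) + t - 1 = (t : ℤ) by ring, Ring.choose_natCast, Nat.choose_self]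
  simp [Int.negOnePow_def, Units.smul_def]

/-- Vandermonde's identity `∑_{s+t=r} C(c,s) C(-1,t) = C(c-1,r)`, up to terms divisible
by `b^N`. -/
theorem pow_dvd_sum_choose_smul_sum_neg_pow_sub (c : ℤ) (b : A) (N : ℕ) (f : ℕ → A) :
    b ^ N ∣
      ∑ s ∈ range N, Ring.choose c s • (b ^ s * ∑ t ∈ range N, (-b) ^ t * f (s + t))
        - ∑ r ∈ range N, Ring.choose (c - 1) r • (b ^ r * f r) := by
  have h := pow_dvd_sum_range_sum_range_sub_sum_antidiagonal b N
    (fun s t => (Ring.choose c s * Ring.choose (-1) t) • (b ^ (s + t) * f (s + t)))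
    fun s t hst => by
      rw [zsmul_eq_mul]; exact dvd_mul_of_dvd_right ((pow_dvd_pow b hst).mul_right _) _
  convert h using 2
  · refine sum_congr rfl fun s _ => ?_
    rw [mul_sum, smul_sum]
    refine sum_congr rfl fun t _ => ?_
    rw [choose_neg_one, zsmul_eq_mul, zsmul_eq_mul]
    push_cast
    ring
  · refine sum_congr rfl fun r _ => ?_
    rw [sub_eq_add_neg, Ring.add_choose_eq r (Commute.all c (-1)), sum_smul]
    exact sum_congr rfl fun p hp => by rw [HasAntidiagonal.mem_antidiagonal.mp hp]

theorem mk_pow_mul_one_sub_C_mul_X (a : A) :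
    (PowerSeries.mk fun n => a ^ n) * (1 - C a * X) = 1 := by
  have h := congrArg (rescale a) (mk_one_mul_one_sub_eq_one A)
  simpa only [map_mul, map_sub, map_one, rescale_X, rescale_mk, Pi.one_apply, mul_one] using h

theorem coeff_add_mk_pow_mul_of_coeff_eq_zero (a : A) {φ : A⟦X⟧} {k : ℕ}
    (hφ : ∀ t, k < t → coeff t φ = 0) (r : ℕ) :
    coeff (k + r) ((PowerSeries.mk fun n => a ^ n) * φ) =
      a ^ r * coeff k ((PowerSeries.mk fun n => a ^ n) * φ) := by
  induction r with
  | zero => simp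
  | succ r ih =>
    have h := congrArg (coeff (k + r + 1)) (congrArg (· * φ) (mk_pow_mul_one_sub_C_mul_X a))
    simp only [one_mul] at h
    rw [mul_comm _ (1 - C a * X), mul_assoc, sub_mul, one_mul, mul_assoc, map_sub, coeff_C_mul,
      coeff_succ_X_mul, hφ _ (by omega), sub_eq_zero] at h
    rw [← add_assoc, h, ih, pow_succ]
    ring

/-- `∏_{ℓ<k} (1 + (X + c) b_ℓ)`, the `b`-part of the generating series `F`. -/
noncomputable def bProd (c : A) (b : ℕ → A) (k : ℕ) : A⟦X⟧ :=
  ∏ ℓ ∈ range k, (1 + (X + C c) * C (b ℓ))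

theorem bProd_succ (c : A) (b : ℕ → A) (k : ℕ) :
    bProd c b (k + 1) = bProd c b k + C (b k) * (X * bProd c b k) + C (c * b k) * bProd c b k := by
  rw [bProd, prod_range_succ, ← bProd, map_mul]
  ring

theorem coeff_bProd_eq_zero (c : A) (b : ℕ → A) {k t : ℕ} (h : k < t) :
    coeff t (bProd c b k) = 0 := by
  induction k generalizing t with
  | zero => rw [bProd, prod_range_zero, coeff_one, if_neg (by omega)]
  | succ k ih =>
    obtain ⟨t, rfl⟩ : ∃ t', t = t' + 1 := ⟨t - 1, by omega⟩
    rw [bProd_succ, map_add, map_add, coeff_C_mul, coeff_C_mul, coeff_succ_X_mul,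
      ih (by omega), ih (by omega)]
    ring

theorem coeff_mk_pow_mul_bProd (a c : A) (b : ℕ → A) (k : ℕ) :
    coeff k ((PowerSeries.mk fun n => a ^ n) * bProd c b k) =
      ∏ ℓ ∈ range k, (a + b ℓ + c * a * b ℓ) := by
  induction k with
  | zero => simp [bProd, coeff_mk]
  | succ k ih =>
    set g : A⟦X⟧ := PowerSeries.mk fun n => a ^ n
    have hshift := coeff_add_mk_pow_mul_of_coeff_eq_zero (k := k) a
      (fun t ht => coeff_bProd_eq_zero c b ht) 1
    rw [bProd_succ, show g * (bProd c b k + C (b k) * (X * bProd c b k) + C (c * b k) * bProd c b k)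
        = g * bProd c b k + C (b k) * (X * (g * bProd c b k)) + C (c * b k) * (g * bProd c b k)
        by ring, map_add, map_add, coeff_C_mul, coeff_C_mul, coeff_succ_X_mul, hshift, ih,
      prod_range_succ]
    ring

theorem coeff_add_mk_pow_mul_bProd (a c : A) (b : ℕ → A) (k r : ℕ) :
    coeff (k + r) ((PowerSeries.mk fun n => a ^ n) * bProd c b k) =
      a ^ r * ∏ ℓ ∈ range k, (a + b ℓ + c * a * b ℓ) := by
  rw [coeff_add_mk_pow_mul_of_coeff_eq_zero a (fun t ht => coeff_bProd_eq_zero c b ht),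
    coeff_mk_pow_mul_bProd]

end CommRing

variable {d : ℕ}

theorem beta_pow_dvd_iff {N : ℕ} {φ : R d} :
    β d ^ N ∣ φ ↔
      ∀ n : Idx d →₀ ℕ, n (Sum.inl ()) < N → MvPowerSeries.coeff n φ = 0 :=
  MvPowerSeries.X_pow_dvd_iff

theorem eq_of_forall_beta_pow_dvd_sub {φ ψ : R d} (h : ∀ N, β d ^ N ∣ φ - ψ) :
    φ = ψ := by
  ext n
  have := beta_pow_dvd_iff.mp (h (n (Sum.inl ()) + 1)) n (Nat.lt_succ_self _)
  rwa [map_sub, sub_eq_zero] at this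

theorem coeff_seriesSum (f : ℕ → R d) (n : Idx d →₀ ℕ) :
    MvPowerSeries.coeff n (seriesSum d f) =
      ∑ s ∈ range (n (Sum.inl ()) + 1), MvPowerSeries.coeff n (f s) :=
  rfl

theorem beta_pow_dvd_seriesSum_sub (f : ℕ → R d) (hf : ∀ s, β d ^ s ∣ f s) (N : ℕ) :
    β d ^ N ∣ seriesSum d f - ∑ s ∈ range N, f s := by
  refine beta_pow_dvd_iff.mpr fun n hn => ?_
  rw [map_sub, coeff_seriesSum, map_sum, ← neg_sub,
    ← sum_sdiff_eq_sub (range_subset_range.mpr hn), neg_eq_zero]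
  exact sum_eq_zero fun s hs =>
    beta_pow_dvd_iff.mp (hf s) n (by simp only [mem_sdiff, mem_range] at hs; omega)

theorem beta_pow_dvd_G_sub (k : ℕ) (m : ℤ) (N : ℕ) :
    β d ^ N ∣ G d k m - ∑ t ∈ range N, (-β d) ^ t * Fcoeff d k (m + t) :=
  beta_pow_dvd_seriesSum_sub _ (fun t => Dvd.intro ((-1) ^ t * Fcoeff d k (m + t)) (by ring)) N

theorem beta_pow_dvd_seriesSum_choose_smul_G_sub (k : ℕ) (c m : ℤ) (N : ℕ) :
    β d ^ N ∣ (seriesSum d fun s => Ring.choose c s • (β d ^ s * G d k (m + s)))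
      - ∑ r ∈ range N, Ring.choose (c - 1) r • (β d ^ r * Fcoeff d k (m + r)) := by
  have hseries := beta_pow_dvd_seriesSum_sub
    (fun s => Ring.choose c s • (β d ^ s * G d k (m + s)))
    (fun s => by rw [zsmul_eq_mul]; exact dvd_mul_of_dvd_right (dvd_mul_right _ _) _) N
  have htrunc : β d ^ N ∣ ∑ s ∈ range N, Ring.choose c s • (β d ^ s * G d k (m + s))
      - ∑ s ∈ range N, Ring.choose c s •
          (β d ^ s * ∑ t ∈ range N, (-β d) ^ t * Fcoeff d k (m + (s + t : ℕ))) := by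
    rw [← sum_sub_distrib]
    refine dvd_sum fun s _ => ?_
    rw [← smul_sub, ← mul_sub, zsmul_eq_mul]
    simp only [Nat.cast_add, ← add_assoc]
    exact dvd_mul_of_dvd_right ((beta_pow_dvd_G_sub k (m + s) N).mul_left _) _
  have hvand := pow_dvd_sum_choose_smul_sum_neg_pow_sub c (β d) N fun n => Fcoeff d k (m + n)
  have := dvd_add (dvd_add hseries htrunc) hvand
  rwa [sub_add_sub_cancel, sub_add_sub_cancel] at this

theorem one_add_beta_mul_x_mul_invOneAdd (j : Fin d) : (1 + β d * x d j) * invOneAdd d j = 1 :=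
  MvPowerSeries.mul_invOfUnit _ _ (by simp [β, x])

theorem Fcoeff_eq_coeff_X_pow_mul (k : ℕ) {t : ℤ} {E M : ℕ} (h : (M : ℤ) - E = t) :
    Fcoeff d k t = coeff M (X ^ E * F d k) := by
  rw [coeff_X_pow_mul', Fcoeff]
  by_cases hE : E ≤ M
  · rw [if_pos hE, if_pos (by omega), show t.toNat = M - E by omega]
  · rw [if_neg hE, if_neg (by omega)]

theorem prod_one_add_C_mul_eq_sum_esym (S : Finset (Fin d)) (f : Fin d → R d) (Y : (R d)⟦X⟧) :
    ∏ r ∈ S, (1 + C (f r) * Y) = ∑ p ∈ range (#S + 1), C (esym d S p f) * Y ^ p := by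
  rw [prod_one_add, sum_powerset]
  refine sum_congr rfl fun p _ => ?_
  rw [esym, map_sum, sum_mul]
  refine sum_congr rfl fun t ht => ?_
  rw [prod_mul_distrib, prod_const, map_prod, (mem_powersetCard.mp ht).2]

theorem one_sub_C_xbar_mul (r : Fin d) :
    1 - C (xbar d r) * (X + C (β d)) = C (invOneAdd d r) * (1 - C (x d r) * X) := by
  have h := congrArg C (one_add_beta_mul_x_mul_invOneAdd r)
  simp only [xbar, map_mul, map_add, map_one] at h ⊢
  linear_combination -h

/-- `∑_p (-1)^p ē_p (u+β)^p = ∏_{r ≠ j} (1 - xᵣu)/(1 + βxᵣ)` is the inverse of all factors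
of `F` but the `j`-th. -/
theorem sum_esym_mul_add_pow_mul_F (j : Fin d) (k : ℕ) :
    (∑ p ∈ range d, C ((-1) ^ p * esym d (univ \ {j}) p (xbar d)) * (X + C (β d)) ^ p) * F d k
      = C (1 + β d * x d j) * (PowerSeries.mk fun n => x d j ^ n) * bProd (β d) (b d) k := by
  have hcard : #(univ \ {j}) + 1 = d := by
    rw [card_sdiff_of_subset (subset_univ _), card_singleton, card_univ, Fintype.card_fin]
    have := j.pos
    omega
  have hsum : ∑ p ∈ range d, C ((-1) ^ p * esym d (univ \ {j}) p (xbar d)) * (X + C (β d)) ^ p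
      = ∏ r ∈ univ \ {j}, C (invOneAdd d r) * (1 - C (x d r) * X) := by
    calc _ = ∑ p ∈ range (#(univ \ {j}) + 1),
          C (esym d (univ \ {j}) p (xbar d)) * (-(X + C (β d))) ^ p := by
          rw [hcard]
          refine sum_congr rfl fun p _ => ?_
          rw [map_mul, map_pow, map_neg, map_one, neg_pow (X + C (β d))]
          ring
      _ = _ := (prod_one_add_C_mul_eq_sum_esym _ _ _).symm
      _ = _ := prod_congr rfl fun r _ => by rw [← one_sub_C_xbar_mul]; ring
  have hunit : ∀ r, C (invOneAdd d r) * (1 - C (x d r) * X) *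
      (C (1 + β d * x d r) * PowerSeries.mk fun n => x d r ^ n) = 1 := fun r => by
    have h := congrArg C (one_add_beta_mul_x_mul_invOneAdd r)
    rw [map_mul, map_one] at h
    linear_combination (1 - C (x d r) * X) * (PowerSeries.mk fun n => x d r ^ n) * h
      + mk_pow_mul_one_sub_C_mul_X (x d r)
  rw [hsum, sdiff_singleton_eq_erase, F, ← bProd, ← mul_prod_erase univ _ (mem_univ j)]
  rw [show ∀ P Q V W : (R d)⟦X⟧, P * (V * Q * W) = V * (P * Q) * W by intros; ring,
    ← prod_mul_distrib, prod_congr rfl fun r _ => hunit r, prod_const_one, mul_one]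

theorem C_beta_pow_dvd_sum_esym_mul_truncBinomial_mul_F_sub (j : Fin d) (k q N : ℕ) :
    C (β d ^ (N + 1)) ∣
      (∑ p ∈ range d, C ((-1) ^ p * esym d (univ \ {j}) p (xbar d)) *
          (X ^ p * truncBinomial ((p : ℤ) - q - 1) N X (C (β d)))) * F d k
      - truncBinomial (-((q : ℤ) + 1)) N X (C (β d)) *
          (C (1 + β d * x d j) * (PowerSeries.mk fun n => x d j ^ n) * bProd (β d) (b d) k) := by
  rw [← sum_esym_mul_add_pow_mul_F, sum_mul, sum_mul, mul_sum, ← sum_sub_distrib]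
  refine dvd_sum fun p _ => ?_
  have h := pow_dvd_pow_mul_truncBinomial_sub (-((q : ℤ) + 1)) N p X (C (β d))
  rw [show -((q : ℤ) + 1) + p = (p : ℤ) - q - 1 by ring, ← map_pow] at h
  convert h.mul_left (C ((-1) ^ p * esym d (univ \ {j}) p (xbar d)) * F d k) using 1
  ring

theorem beta_pow_dvd_sum_esym_mul_sum_Fcoeff_sub (j : Fin d) (k q N : ℕ) :
    β d ^ (N + 1) ∣
      ∑ p ∈ range d, (∑ r ∈ range (N + 1),
          Ring.choose ((p : ℤ) - q - 1) r • (β d ^ r * Fcoeff d k (k + r - p))) *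
        ((-1) ^ p * esym d (univ \ {j}) p (xbar d))
      - fb d (x d j) k * invOneAdd d j ^ q := by
  have hsum : ∑ p ∈ range d, (∑ r ∈ range (N + 1),
          Ring.choose ((p : ℤ) - q - 1) r • (β d ^ r * Fcoeff d k (k + r - p))) *
        ((-1) ^ p * esym d (univ \ {j}) p (xbar d))
      = coeff (k + N) ((∑ p ∈ range d, C ((-1) ^ p * esym d (univ \ {j}) p (xbar d)) *
          (X ^ p * truncBinomial ((p : ℤ) - q - 1) N X (C (β d)))) * F d k) := by
    rw [sum_mul, map_sum]
    refine sum_congr rfl fun p _ => ?_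
    rw [show ∀ (w : R d) (P T G : (R d)⟦X⟧), C w * (P * T) * G = C w * (T * (P * G)) from
      fun _ _ _ _ => by ring, coeff_C_mul, coeff_add_truncBinomial_mul, mul_comm]
    congr 1
    refine sum_congr rfl fun r _ => ?_
    rw [zsmul_eq_mul, Fcoeff_eq_coeff_X_pow_mul k (E := p) (M := k + r) (by push_cast; ring)]
    ring
  have hcoeff : coeff (k + N) (truncBinomial (-((q : ℤ) + 1)) N X (C (β d)) *
        (C (1 + β d * x d j) * (PowerSeries.mk fun n => x d j ^ n) * bProd (β d) (b d) k))
      = fb d (x d j) k *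
          ((1 + β d * x d j) * truncBinomial (-((q : ℤ) + 1)) N 1 (β d * x d j)) := by
    rw [mul_assoc (C _), coeff_add_truncBinomial_mul, truncBinomial, mul_sum, mul_sum]
    refine sum_congr rfl fun r _ => ?_
    rw [coeff_C_mul, coeff_add_mk_pow_mul_bProd, fb]
    simp only [oplus]
    ring
  have hbinom := pow_dvd_one_add_mul_truncBinomial_sub
    ((mul_comm _ _).trans (one_add_beta_mul_x_mul_invOneAdd j)) q N
  have hF := dvd_coeff_sub_of_C_dvd
    (C_beta_pow_dvd_sum_esym_mul_truncBinomial_mul_F_sub j k q N) (k + N)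
  rw [← hsum, hcoeff] at hF
  rw [mul_pow] at hbinom
  convert dvd_add hF (((dvd_mul_right _ _).trans hbinom).mul_left (fb d (x d j) k)) using 1
  ring

theorem beta_pow_dvd_sum_fin_esym_mul_sum_Fcoeff_sub (i j : Fin d) {k : ℕ} {c : ℤ}
    (hk : (k : ℤ) = c + d - ((i : ℕ) + 1)) (N : ℕ) :
    β d ^ (N + 1) ∣
      ∑ l : Fin d, (∑ r ∈ range (N + 1), Ring.choose ((i : ℕ) - (l : ℕ) - 1 : ℤ) r •
          (β d ^ r * Fcoeff d k (c + (l : ℕ) - (i : ℕ) + r))) *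
        ((-1) ^ (d - 1 - (l : ℕ)) * esym d (univ \ {j}) (d - 1 - (l : ℕ)) (xbar d))
      - fb d (x d j) k * invOneAdd d j ^ (d - 1 - (i : ℕ)) := by
  have h := beta_pow_dvd_sum_esym_mul_sum_Fcoeff_sub j k (d - 1 - i) N
  rw [← sum_range_reflect, ← Fin.sum_univ_eq_sum_range] at h
  convert h using 7 with l _ r _
  all_goals have := i.isLt; have := l.isLt
  · omega
  · congr 1; omega

/-- The `(i,j)`-entry of `H'·M̄` equals `[x_j|b]^{a_i+d-i} (1+βx_j)^{i-d}`. -/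
theorem grothendieck_HMbar_entry
    (d : ℕ) (a : Fin d → ℤ) (ha : ∀ i : Fin d, 0 ≤ a i + d - ((i : ℕ) + 1)) (i j : Fin d) :
    (Matrix.of (fun i j : Fin d =>
        seriesSum d fun s =>
          Ring.choose (((i : ℕ) : ℤ) - ((j : ℕ) : ℤ)) s •
            (β d ^ s * G d (a i + d - ((i : ℕ) + 1)).toNat (a i + (j : ℕ) - (i : ℕ) + s))) *
      Matrix.of (fun i j : Fin d =>
        (-1 : R d) ^ (d - 1 - (i : ℕ)) *
          esym d (Finset.univ \ {j}) (d - 1 - (i : ℕ)) (xbar d))) i j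
      = fb d (x d j) (a i + d - ((i : ℕ) + 1)).toNat *
          invOneAdd d j ^ (d - 1 - (i : ℕ)) := by
  set k := (a i + d - ((i : ℕ) + 1)).toNat
  have hk : (k : ℤ) = a i + d - ((i : ℕ) + 1) := Int.toNat_of_nonneg (ha i)
  rw [Matrix.mul_apply]
  simp only [Matrix.of_apply]
  refine eq_of_forall_beta_pow_dvd_sub fun N => ?_
  rcases N with _ | N
  · simp
  have hH := dvd_sum fun (l : Fin d) (_ : l ∈ univ) =>
    (beta_pow_dvd_seriesSum_choose_smul_G_sub k (i - l) (a i + l - i) (N + 1)).mul_right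
      ((-1 : R d) ^ (d - 1 - (l : ℕ)) * esym d (univ \ {j}) (d - 1 - (l : ℕ)) (xbar d))
  simp only [sub_mul, sum_sub_distrib] at hH
  have h := dvd_add hH (beta_pow_dvd_sum_fin_esym_mul_sum_Fcoeff_sub i j hk N)
  rwa [sub_add_sub_cancel] at h

end GrothDet
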